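/- Let G = (X, +, ≤) be an ordered group. The order ≤ is a semiorder if and only if there exist a compatible total quasi-order ≼ on G and a normal final segment F of (X, ≼) with 0 ∉ F such that for all x, y ∈ G: x < y if and only if y − x ∈ F. -/

import Mathlib

namespace ThrPaper

universe u

variable {X : Type*}

/-- The strict order associated to a reflexive relation `le`. -/
def Lt (le : X → X → Prop) (x y : X) : Prop := le x y ∧ ¬ le y x

/-- `x` and `y` are incomparable with respect to `le`. -/
def Incomp (le : X → X → Prop) (x y : X) : Prop := ¬ le x y ∧ ¬ le y x

/-- `le` is a partial order (reflexive, transitive, antisymmetric). -/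
def IsPartialOrderRel (le : X → X → Prop) : Prop :=
  (∀ x, le x x) ∧ (∀ x y z, le x y → le y z → le x z) ∧ ∀ x y, le x y → le y x → x = y

/-- `le` is total. -/
def IsTotalRel (le : X → X → Prop) : Prop := ∀ x y, le x y ∨ le y x

/-- Compatibility of a relation with the (not necessarily abelian) group operation. -/
def IsCompat {G : Type*} [AddGroup G] (le : G → G → Prop) : Prop :=
  ∀ a b x y : G, le x y → le (a + x + b) (a + y + b)

/-- The trace quasi-order `≤_pred`: `x ≤_pred y` iff every `z < x` satisfies `z < y`. -/
def PredLe (le : X → X → Prop) (x y : X) : Prop := ∀ z, Lt le z x → Lt le z y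

/-- The trace quasi-order `≤_succ`: `x ≤_succ y` iff every `z > y` satisfies `z > x`. -/
def SuccLe (le : X → X → Prop) (x y : X) : Prop := ∀ z, Lt le y z → Lt le x z

/-- `le` is a threshold order: `≤_pred` and `≤_succ` are equal and are total orders. -/
def IsThresholdOrder (le : X → X → Prop) : Prop :=
  (∀ x y, PredLe le x y ↔ SuccLe le x y) ∧
  (∀ x y, PredLe le x y ∨ PredLe le y x) ∧
  ∀ x y, PredLe le x y → PredLe le y x → x = y

/-- The poset `2 ⊕ 2` embeds into `le`. -/
def Embeds2p2 (le : X → X → Prop) : Prop :=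
  ∃ a b c d : X, Lt le a b ∧ Lt le c d ∧
    Incomp le a c ∧ Incomp le a d ∧ Incomp le b c ∧ Incomp le b d

/-- The poset `3 ⊕ 1` embeds into `le`. -/
def Embeds3p1 (le : X → X → Prop) : Prop :=
  ∃ a b c d : X, Lt le a b ∧ Lt le b c ∧ Incomp le d a ∧ Incomp le d b ∧ Incomp le d c

/-- The poset `1 ⊕ 2` embeds into `le`. -/
def Embeds1p2 (le : X → X → Prop) : Prop :=
  ∃ a b c : X, Lt le a b ∧ Incomp le c a ∧ Incomp le c b

/-! For a semiorder, `x < y` iff `0 < y - x` by translation invariance, so `F = {z | 0 < z}` is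
forced, and for `≼` one takes the trace: `x ≼ y` iff everything below `x` is below `y` and
everything above `y` is above `x`. Excluding `2 ⊕ 2` and `3 ⊕ 1` amounts to the Ferrers property
and semitransitivity of `<`, and these are exactly what make the trace total. Conversely, for a
compatible total `≼` and a final segment `F`, comparing `b` with `d` shows that `y - x ∈ F` is
Ferrers and semitransitive. -/

def IsFerrers (lt : X → X → Prop) : Prop :=
  ∀ a b c d, lt a b → lt c d → lt c b ∨ lt a d

def IsSemitransitive (lt : X → X → Prop) : Prop :=
  ∀ a b c d, lt a b → lt b c → lt a d ∨ lt d c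

def TraceLe (le : X → X → Prop) (x y : X) : Prop := PredLe le x y ∧ SuccLe le x y

section Poset

variable {le : X → X → Prop} {a b c d x y z : X}

theorem Incomp.symm (h : Incomp le x y) : Incomp le y x := ⟨h.2, h.1⟩

theorem Incomp.not_lt (h : Incomp le x y) : ¬ Lt le x y := fun hl => h.1 hl.1

theorem le_of_le_of_not_lt (hab : le a b) (h : ¬ Lt le a b) : le b a :=
  not_not.1 fun hba => h ⟨hab, hba⟩

theorem Lt.trans_le [IsTrans X le] (hab : Lt le a b) (hbc : le b c) : Lt le a c :=
  ⟨_root_.trans hab.1 hbc, fun hca => hab.2 (_root_.trans hbc hca)⟩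

theorem Lt.le_trans [IsTrans X le] (hbc : Lt le b c) (hab : le a b) : Lt le a c :=
  ⟨_root_.trans hab hbc.1, fun hca => hbc.2 (_root_.trans hca hab)⟩

theorem embeds2p2_of_not_isFerrers [IsTrans X le] (hab : Lt le a b) (hcd : Lt le c d)
    (hcb : ¬ Lt le c b) (had : ¬ Lt le a d) : Embeds2p2 le := by
  have hda : ¬ le d a := fun h => hcb ((hab.le_trans h).le_trans hcd.1)
  have hbc : ¬ le b c := fun h => had ((hab.trans_le h).trans_le hcd.1)
  exact ⟨a, b, c, d, hab, hcd,
    ⟨fun h => had (hcd.le_trans h), fun h => hcb (hab.le_trans h)⟩,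
    ⟨fun h => hda (le_of_le_of_not_lt h had), hda⟩,
    ⟨hbc, fun h => hbc (le_of_le_of_not_lt h hcb)⟩,
    ⟨fun h => had (hab.trans_le h), fun h => hcb (hcd.trans_le h)⟩⟩

theorem embeds3p1_of_not_isSemitransitive [IsTrans X le] (hab : Lt le a b)
    (hbc : Lt le b c) (had : ¬ Lt le a d) (hdc : ¬ Lt le d c) : Embeds3p1 le := by
  have hac : Lt le a c := hab.trans_le hbc.1
  have hda : ¬ le d a := fun h => hdc (hac.le_trans h)
  have hcd : ¬ le c d := fun h => had (hac.trans_le h)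
  exact ⟨a, b, c, d, hab, hbc, ⟨hda, fun h => hda (le_of_le_of_not_lt h had)⟩,
    ⟨fun h => hdc (hbc.le_trans h), fun h => had (hab.trans_le h)⟩,
    ⟨fun h => hcd (le_of_le_of_not_lt h hdc), hcd⟩⟩

theorem not_embeds2p2_iff_isFerrers [IsTrans X le] :
    ¬ Embeds2p2 le ↔ IsFerrers (Lt le) := by
  refine ⟨fun h a b c d hab hcd => ?_, ?_⟩
  · by_contra! hcross
    exact h (embeds2p2_of_not_isFerrers hab hcd hcross.1 hcross.2)
  · rintro hF ⟨a, b, c, d, hab, hcd, -, had, hbc, -⟩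
    exact (hF a b c d hab hcd).elim hbc.symm.not_lt had.not_lt

theorem not_embeds3p1_iff_isSemitransitive [IsTrans X le] :
    ¬ Embeds3p1 le ↔ IsSemitransitive (Lt le) := by
  refine ⟨fun h a b c d hab hbc => ?_, ?_⟩
  · by_contra! hcross
    exact h (embeds3p1_of_not_isSemitransitive hab hbc hcross.1 hcross.2)
  · rintro hS ⟨a, b, c, d, hab, hbc, hda, -, hdc⟩
    exact (hS a b c d hab hbc).elim hda.symm.not_lt hdc.not_lt

theorem exists_lt_not_lt_of_not_predLe (h : ¬ PredLe le x y) :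
    ∃ z, Lt le z x ∧ ¬ Lt le z y := by
  simpa [PredLe] using h

theorem exists_lt_not_lt_of_not_succLe (h : ¬ SuccLe le x y) :
    ∃ z, Lt le y z ∧ ¬ Lt le x z := by
  simpa [SuccLe] using h

theorem IsFerrers.predLe_total (hF : IsFerrers (Lt le)) (x y : X) :
    PredLe le x y ∨ PredLe le y x := by
  refine or_iff_not_imp_left.2 fun hxy z hzy => ?_
  obtain ⟨w, hwx, hwy⟩ := exists_lt_not_lt_of_not_predLe hxy
  exact (hF w x z y hwx hzy).resolve_right hwy

theorem IsFerrers.succLe_total (hF : IsFerrers (Lt le)) (x y : X) :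
    SuccLe le x y ∨ SuccLe le y x := by
  refine or_iff_not_imp_left.2 fun hxy z hxz => ?_
  obtain ⟨w, hyw, hxw⟩ := exists_lt_not_lt_of_not_succLe hxy
  exact (hF x z y w hxz hyw).resolve_right hxw

theorem IsSemitransitive.predLe_or_succLe (hS : IsSemitransitive (Lt le)) (x y : X) :
    PredLe le x y ∨ SuccLe le y x := by
  refine or_iff_not_imp_left.2 fun hxy z hxz => ?_
  obtain ⟨w, hwx, hwy⟩ := exists_lt_not_lt_of_not_predLe hxy
  exact (hS w x z y hwx hxz).resolve_left hwy

theorem traceLe_refl (x : X) : TraceLe le x x := ⟨fun _ h => h, fun _ h => h⟩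

theorem traceLe_trans (hxy : TraceLe le x y) (hyz : TraceLe le y z) : TraceLe le x z :=
  ⟨fun w h => hyz.1 w (hxy.1 w h), fun w h => hxy.2 w (hyz.2 w h)⟩

theorem isTotalRel_traceLe (hF : IsFerrers (Lt le)) (hS : IsSemitransitive (Lt le)) :
    IsTotalRel (TraceLe le) := fun x y => by
  have := hF.predLe_total x y
  have := hF.succLe_total x y
  have := hS.predLe_or_succLe x y
  have := hS.predLe_or_succLe y x
  unfold TraceLe
  tauto

end Poset

section Group

variable {G : Type*} [AddGroup G] {le : G → G → Prop} {x y : G}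

theorem IsCompat.iff (hc : IsCompat le) (a b : G) : le (a + x + b) (a + y + b) ↔ le x y :=
  ⟨fun h => by simpa [add_assoc] using hc (-a) (-b) _ _ h, hc a b x y⟩

theorem IsCompat.lt_iff (hc : IsCompat le) (a b : G) :
    Lt le (a + x + b) (a + y + b) ↔ Lt le x y := by
  simp only [Lt, hc.iff]

theorem IsCompat.lt_iff_zero_lt_sub (hc : IsCompat le) : Lt le x y ↔ Lt le 0 (y - x) := by
  simpa [sub_eq_add_neg] using (hc.lt_iff (x := x) (y := y) 0 (-x)).symm

theorem IsCompat.predLe (hc : IsCompat le) (a b : G) (h : PredLe le x y) :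
    PredLe le (a + x + b) (a + y + b) := fun z hz => by
  obtain ⟨w, rfl⟩ : ∃ w, z = a + w + b := ⟨-a + z + -b, by simp [add_assoc]⟩
  rw [hc.lt_iff] at hz ⊢
  exact h w hz

theorem IsCompat.succLe (hc : IsCompat le) (a b : G) (h : SuccLe le x y) :
    SuccLe le (a + x + b) (a + y + b) := fun z hz => by
  obtain ⟨w, rfl⟩ : ∃ w, z = a + w + b := ⟨-a + z + -b, by simp [add_assoc]⟩
  rw [hc.lt_iff] at hz ⊢
  exact h w hz

theorem IsCompat.traceLe (hc : IsCompat le) : IsCompat (TraceLe le) :=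
  fun a b _ _ h => ⟨hc.predLe a b h.1, hc.succLe a b h.2⟩

theorem IsCompat.zero_lt_neg_add_add (hc : IsCompat le) (h : Lt le 0 x) (u : G) :
    Lt le 0 (-u + x + u) := by
  simpa using (hc.lt_iff (-u) u).2 h

end Group

section FinalSegment

variable {G : Type*} [AddGroup G] {ple : G → G → Prop} {F : Set G}

theorem isFerrers_of_finalSegment (htot : IsTotalRel ple) (hcp : IsCompat ple)
    (hF : ∀ x ∈ F, ∀ y, ple x y → y ∈ F) : IsFerrers fun x y : G => y - x ∈ F := by
  intro a b c d hab hcd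
  rcases htot d b with hdb | hbd
  · exact .inl (hF _ hcd _ (by simpa [sub_eq_add_neg] using hcp 0 (-c) _ _ hdb))
  · exact .inr (hF _ hab _ (by simpa [sub_eq_add_neg] using hcp 0 (-a) _ _ hbd))

theorem isSemitransitive_of_finalSegment (htot : IsTotalRel ple) (hcp : IsCompat ple)
    (hF : ∀ x ∈ F, ∀ y, ple x y → y ∈ F) :
    IsSemitransitive fun x y : G => y - x ∈ F := by
  intro a b c d hab hbc
  rcases htot b d with hbd | hdb
  · exact .inl (hF _ hab _ (by simpa [sub_eq_add_neg] using hcp 0 (-a) _ _ hbd))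
  · exact .inr (hF _ hbc _ (by simpa [sub_eq_add_neg, add_assoc] using hcp (c + -b) (-d) _ _ hdb))

end FinalSegment

/-- The order of an ordered group `G` is a semiorder iff there are a
compatible total quasi-order `≼` on `G` and a normal final segment `F` of `(G, ≼)` with
`0 ∉ F` such that `x < y` iff `y - x ∈ F`. -/
theorem semiorder_iff_finalSegment {G : Type*} [AddGroup G] (le : G → G → Prop)
    (hpo : IsPartialOrderRel le) (hc : IsCompat le) :
    (¬ Embeds2p2 le ∧ ¬ Embeds3p1 le) ↔
      ∃ (ple : G → G → Prop) (F : Set G),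
        -- `≼` is a compatible total quasi-order
        (∀ x, ple x x) ∧ (∀ x y z, ple x y → ple y z → ple x z) ∧
        IsTotalRel ple ∧ IsCompat ple ∧
        -- `F` is a normal final segment not containing `0`
        (∀ x ∈ F, ∀ y, ple x y → y ∈ F) ∧
        (∀ x ∈ F, ∀ u : G, -u + x + u ∈ F) ∧
        (0 : G) ∉ F ∧
        -- the strict order of `le` is given by `F`
        (∀ x y : G, Lt le x y ↔ y - x ∈ F) := by
  have : IsTrans G le := ⟨hpo.2.1⟩
  rw [not_embeds2p2_iff_isFerrers, not_embeds3p1_iff_isSemitransitive]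
  constructor
  · rintro ⟨hF, hS⟩
    exact ⟨TraceLe le, {z | Lt le 0 z}, traceLe_refl, fun _ _ _ => traceLe_trans,
      isTotalRel_traceLe hF hS, hc.traceLe, fun x hx _ hxy => hxy.1 0 hx,
      fun _ hx u => hc.zero_lt_neg_add_add hx u, fun h => h.2 h.1,
      fun _ _ => hc.lt_iff_zero_lt_sub⟩
  · rintro ⟨ple, F, -, -, htot, hcp, hF, -, -, hiff⟩
    have hlt : Lt le = fun x y => y - x ∈ F := funext₂ fun x y => propext (hiff x y)
    rw [hlt]
    exact ⟨isFerrers_of_finalSegment htot hcp hF, isSemitransitive_of_finalSegment htot hcp hF⟩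

end ThrPaper
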